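/- arXiv:1009.0369 — 3 statements merged into one kernel-verified Lean document; each statement's English description precedes it below -/
import Mathlib

section
/- For every g ≥ 1 and every τ ∈ H_g, the Riemann theta function z ↦ θ(τ,z) is an entire function of z, i.e. it is complex-differentiable (holomorphic) at every point z ∈ ℂ^g. -/
open Complex Matrix BigOperators

noncomputable section

/-- τ lies in the Siegel upper half-space: symmetric with positive definite imaginary part. -/
def IsSiegel {g : ℕ} (τ : Matrix (Fin g) (Fin g) ℂ) : Prop :=
  τ.IsSymm ∧ (τ.map Complex.im).PosDef

/-- The `n`-th term of the series defining the theta function with characteristic `[ε;δ]`. -/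
def thetaCharTerm {g : ℕ} (τ : Matrix (Fin g) (Fin g) ℂ) (ε δ : Fin g → ℝ)
    (z : Fin g → ℂ) (n : Fin g → ℤ) : ℂ :=
  Complex.exp ((Real.pi : ℂ) * Complex.I *
      ((fun j => (n j : ℂ) + (ε j : ℂ)) ⬝ᵥ (τ *ᵥ fun j => (n j : ℂ) + (ε j : ℂ)))
    + 2 * (Real.pi : ℂ) * Complex.I *
      ((fun j => (n j : ℂ) + (ε j : ℂ)) ⬝ᵥ fun j => z j + (δ j : ℂ)))

/-- The theta function with characteristic `[ε;δ]`. -/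
def thetaChar {g : ℕ} (τ : Matrix (Fin g) (Fin g) ℂ) (ε δ : Fin g → ℝ)
    (z : Fin g → ℂ) : ℂ :=
  ∑' n : Fin g → ℤ, thetaCharTerm τ ε δ z n

/-- The Riemann theta function. -/
def riemannTheta {g : ℕ} (τ : Matrix (Fin g) (Fin g) ℂ) (z : Fin g → ℂ) : ℂ :=
  thetaChar τ 0 0 z

/-- Interpret a mod-2 vector as a vector with entries in {0, 1/2}. -/
def toHalf {g : ℕ} (x : Fin g → ZMod 2) : Fin g → ℝ := fun i => ((x i).val : ℝ) / 2

/-- The theta function of the second order with characteristic ε. -/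
def theta2 {g : ℕ} (τ : Matrix (Fin g) (Fin g) ℂ) (ε : Fin g → ℝ) (z : Fin g → ℂ) : ℂ :=
  ∑' n : Fin g → ℤ,
    Complex.exp (2 * (Real.pi : ℂ) * Complex.I *
        ((fun j => (n j : ℂ) + (ε j : ℂ)) ⬝ᵥ (τ *ᵥ fun j => (n j : ℂ) + (ε j : ℂ)))
      + 4 * (Real.pi : ℂ) * Complex.I *
        ((fun j => (n j : ℂ) + (ε j : ℂ)) ⬝ᵥ z))

/-- The Igusa modular form F_g. -/
def igusaF (g : ℕ) (τ : Matrix (Fin g) (Fin g) ℂ) : ℂ :=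
  2 ^ g * ∑ m : (Fin g → ZMod 2) × (Fin g → ZMod 2),
      (thetaChar τ (toHalf m.1) (toHalf m.2) 0) ^ 16
    - (∑ m : (Fin g → ZMod 2) × (Fin g → ZMod 2),
      (thetaChar τ (toHalf m.1) (toHalf m.2) 0) ^ 8) ^ 2

/-- The standard symplectic form matrix J. -/
def sympJ (g : ℕ) : Matrix (Fin g ⊕ Fin g) (Fin g ⊕ Fin g) ℤ :=
  Matrix.fromBlocks 0 1 (-1) 0

/-- The block matrix [[a,b],[c,d]] is symplectic. -/
def IsSymplectic {g : ℕ} (a b c d : Matrix (Fin g) (Fin g) ℤ) : Prop :=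
  (Matrix.fromBlocks a b c d)ᵀ * sympJ g * Matrix.fromBlocks a b c d = sympJ g

/-- Entrywise coercion of an integer matrix to a complex matrix. -/
def intMat {g : ℕ} (a : Matrix (Fin g) (Fin g) ℤ) : Matrix (Fin g) (Fin g) ℂ :=
  a.map (Int.cast : ℤ → ℂ)

/-- The action of a symplectic block matrix on the Siegel space: τ ↦ (aτ+b)(cτ+d)⁻¹. -/
def sympAct {g : ℕ} (a b c d : Matrix (Fin g) (Fin g) ℤ)
    (τ : Matrix (Fin g) (Fin g) ℂ) : Matrix (Fin g) (Fin g) ℂ :=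
  (intMat a * τ + intMat b) * (intMat c * τ + intMat d)⁻¹


-- linear functional w ↦ ∑ j, (n j) * w j
def Lmap {g : ℕ} (n : Fin g → ℤ) : (Fin g → ℂ) →L[ℂ] ℂ :=
  ∑ j, (n j : ℂ) • (ContinuousLinearMap.proj j)

lemma Lmap_apply {g : ℕ} (n : Fin g → ℤ) (w : Fin g → ℂ) :
    Lmap n w = ∑ j, (n j : ℂ) * w j := by
  simp [Lmap, ContinuousLinearMap.sum_apply, ContinuousLinearMap.proj_apply, smul_eq_mul]

lemma Lmap_norm_le {g : ℕ} (n : Fin g → ℤ) : ‖Lmap n‖ ≤ ∑ j, |(n j : ℝ)| := by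
  refine (norm_sum_le _ _).trans (Finset.sum_le_sum fun j _ => ?_)
  refine le_trans (norm_smul_le ((n j : ℤ):ℂ) (ContinuousLinearMap.proj j : (Fin g → ℂ) →L[ℂ] ℂ)) ?_
  have h1 : ‖(ContinuousLinearMap.proj j : (Fin g → ℂ) →L[ℂ] ℂ)‖ ≤ 1 :=
    ContinuousLinearMap.opNorm_le_bound _ zero_le_one fun x => by
      simpa using norm_le_pi_norm x j
  have h2 : ‖((n j : ℤ) : ℂ)‖ = |(n j : ℝ)| := by
    simp
  calc ‖((n j : ℤ) : ℂ)‖ * ‖(ContinuousLinearMap.proj j : (Fin g → ℂ) →L[ℂ] ℂ)‖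
      ≤ ‖((n j : ℤ) : ℂ)‖ * 1 := by
        exact mul_le_mul_of_nonneg_left h1 (norm_nonneg _)
    _ = |(n j : ℝ)| := by rw [mul_one, h2]

lemma term_eq {g : ℕ} (τ : Matrix (Fin g) (Fin g) ℂ) (w : Fin g → ℂ) (n : Fin g → ℤ) :
    thetaCharTerm τ 0 0 w n =
      Complex.exp ((Real.pi : ℂ) * Complex.I *
          ((fun j => (n j : ℂ)) ⬝ᵥ (τ *ᵥ fun j => (n j : ℂ)))
        + 2 * (Real.pi : ℂ) * Complex.I * Lmap n w) := by
  rw [Lmap_apply]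
  simp [thetaCharTerm, dotProduct]

lemma im_quad {g : ℕ} (τ : Matrix (Fin g) (Fin g) ℂ) (n : Fin g → ℤ) :
    ((fun j => ((n j : ℤ) : ℂ)) ⬝ᵥ (τ *ᵥ fun j => ((n j : ℤ) : ℂ))).im
      = (fun j => ((n j : ℤ) : ℝ)) ⬝ᵥ ((τ.map Complex.im) *ᵥ fun j => ((n j : ℤ) : ℝ)) := by
  simp [dotProduct, mulVec, Complex.im_sum, Complex.mul_im, Finset.mul_sum,
    Matrix.map_apply]

lemma re_piI {q : ℂ} : ((Real.pi : ℂ) * Complex.I * q).re = -(Real.pi * q.im) := by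
  simp [Complex.mul_re, Complex.mul_im]

lemma re_2piI {q : ℂ} : (2 * (Real.pi : ℂ) * Complex.I * q).re = -(2 * Real.pi * q.im) := by
  simp [Complex.mul_re, Complex.mul_im]

lemma im_Lmap_le {g : ℕ} (n : Fin g → ℤ) (w : Fin g → ℂ) :
    |(Lmap n w).im| ≤ (∑ j, |(n j : ℝ)|) * ‖w‖ := by
  rw [Lmap_apply]
  rw [Complex.im_sum]
  refine (Finset.abs_sum_le_sum_abs _ _).trans ?_
  rw [Finset.sum_mul]
  refine Finset.sum_le_sum fun j _ => ?_
  have h1 : (((n j : ℤ) : ℂ) * w j).im = ((n j : ℤ) : ℝ) * (w j).im := by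
    simp [Complex.mul_im]
  rw [h1, abs_mul]
  refine mul_le_mul_of_nonneg_left ?_ (abs_nonneg _)
  calc |(w j).im| ≤ ‖w j‖ := Complex.abs_im_le_norm _
    _ ≤ ‖w‖ := by simpa using norm_le_pi_norm w j

lemma quad_lower {g : ℕ} (hg : 1 ≤ g) {Y : Matrix (Fin g) (Fin g) ℝ} (hY : Y.PosDef) :
    ∃ c > 0, ∀ x : Fin g → ℝ, c * ∑ j, (x j)^2 ≤ x ⬝ᵥ Y *ᵥ x := by
  set Q : (Fin g → ℝ) → ℝ := fun x => x ⬝ᵥ Y *ᵥ x with hQ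
  have hcont : Continuous Q := by
    simp only [hQ, dotProduct, mulVec]
    fun_prop
  have hco : IsCompact (Metric.sphere (0 : Fin g → ℝ) 1) := isCompact_sphere _ _
  haveI : Nonempty (Fin g) := ⟨⟨0, hg⟩⟩
  have hne : (Metric.sphere (0 : Fin g → ℝ) 1).Nonempty :=
    NormedSpace.sphere_nonempty.mpr zero_le_one
  obtain ⟨x₀, hx₀, hmin⟩ := hco.exists_isMinOn hne hcont.continuousOn
  have hx₀ne : x₀ ≠ 0 := by
    intro h
    have := hx₀
    simp [h] at this
  set m := Q x₀ with hm
  have hmpos : 0 < m := by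
    have := hY.dotProduct_mulVec_pos hx₀ne
    simpa [hQ, hm, star_trivial] using this
  refine ⟨m / g, div_pos hmpos (by positivity), fun x => ?_⟩
  rcases eq_or_ne x 0 with rfl | hx
  · simp [hQ]
  · have hnx : (0:ℝ) < ‖x‖ := norm_pos_iff.mpr hx
    have hunit : (‖x‖⁻¹ • x) ∈ Metric.sphere (0 : Fin g → ℝ) 1 := by
      simp [norm_smul, abs_of_pos (inv_pos.mpr hnx), inv_mul_cancel₀ hnx.ne']
    have hQx : Q x = ‖x‖^2 * Q (‖x‖⁻¹ • x) := by
      simp only [hQ, Matrix.mulVec_smul, smul_dotProduct, dotProduct_smul,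
        smul_eq_mul]
      field_simp
    have hsum : ∑ j, (x j)^2 ≤ g * ‖x‖^2 := by
      calc ∑ j, (x j)^2 ≤ ∑ _j : Fin g, ‖x‖^2 := by
            refine Finset.sum_le_sum fun j _ => ?_
            have := norm_le_pi_norm x j
            have h2 : |x j| ≤ ‖x‖ := by simpa using this
            nlinarith [abs_nonneg (x j), _root_.sq_abs (x j)]
          _ = g * ‖x‖^2 := by simp [Finset.sum_const, nsmul_eq_mul]
    have h1 : m * ‖x‖^2 ≤ Q x := by
      rw [hQx]
      have h2 : m ≤ Q (‖x‖⁻¹ • x) := hmin hunit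
      nlinarith [sq_nonneg ‖x‖]
    have hg0 : (0:ℝ) < g := by positivity
    calc m / g * ∑ j, (x j)^2 ≤ m / g * (g * ‖x‖^2) := by
          apply mul_le_mul_of_nonneg_left hsum (by positivity)
        _ = m * ‖x‖^2 := by field_simp
        _ ≤ Q x := h1


lemma summable_pi_prod {v : ℤ → ℝ} (hv : Summable v) (h0 : ∀ k, 0 ≤ v k) :
    ∀ g : ℕ, Summable (fun n : Fin g → ℤ => ∏ j, v (n j)) := by
  intro g
  induction g with
  | zero => exact Summable.of_finite
  | succ g ih =>
    have hG : Summable (fun p : ℤ × (Fin g → ℤ) => v p.1 * ∏ j, v (p.2 j)) := by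
      apply Summable.mul_of_nonneg hv ih (fun k => h0 k)
      exact fun n => Finset.prod_nonneg fun j _ => h0 _
    have := (Fin.consEquiv (fun _ : Fin (g+1) => ℤ)).symm.summable_iff.mpr hG
    refine this.congr fun n => ?_
    simp only [Function.comp, Fin.consEquiv, Equiv.coe_fn_symm_mk, Fin.prod_univ_succ]
    rfl

lemma summable_v {c A : ℝ} (hc : 0 < c) :
    Summable (fun k : ℤ => Real.exp (-(Real.pi * c) * (k:ℝ)^2 + A * |(k:ℝ)|)) := by
  have h := summable_pow_mul_jacobiTheta₂_term_bound (A / (2 * Real.pi)) hc 0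
  refine h.congr fun k => ?_
  rw [pow_zero, one_mul]
  congr 1
  have hπ : (Real.pi : ℝ) ≠ 0 := Real.pi_ne_zero
  rw [Int.cast_abs]
  field_simp
  ring

set_option maxHeartbeats 1000000 in
/-- the Riemann theta function is an entire function of z. -/
theorem riemannTheta_entire (g : ℕ) (hg : 1 ≤ g) (τ : Matrix (Fin g) (Fin g) ℂ)
    (hτ : IsSiegel τ) (z : Fin g → ℂ) :
    DifferentiableAt ℂ (fun w : Fin g → ℂ => riemannTheta τ w) z := by
  obtain ⟨-, hpd⟩ := hτ
  obtain ⟨c, hc, hcq⟩ := quad_lower hg hpd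
  set A : ℝ := 2 * Real.pi * (‖z‖ + 1) + 1 with hA
  set v : ℤ → ℝ := fun k => Real.exp (-(Real.pi * c) * (k:ℝ)^2 + A * |(k:ℝ)|) with hvdef
  have hv : Summable v := summable_v hc
  have hv0 : ∀ k, 0 ≤ v k := fun k => (Real.exp_pos _).le
  have hU : Summable (fun n : Fin g → ℤ => ∏ j, v (n j)) := summable_pi_prod hv hv0 g
  set u : (Fin g → ℤ) → ℝ := fun n => (2 * Real.pi) * ∏ j, v (n j) with hudef
  have hu : Summable u := hU.mul_left _
  set f : (Fin g → ℤ) → (Fin g → ℂ) → ℂ := fun n w =>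
    Complex.exp ((Real.pi : ℂ) * Complex.I *
        ((fun j => ((n j : ℤ) : ℂ)) ⬝ᵥ (τ *ᵥ fun j => ((n j : ℤ) : ℂ)))
      + 2 * (Real.pi : ℂ) * Complex.I * Lmap n w) with hfdef
  set f' : (Fin g → ℤ) → (Fin g → ℂ) → ((Fin g → ℂ) →L[ℂ] ℂ) := fun n w =>
    f n w • ((2 * (Real.pi : ℂ) * Complex.I) • Lmap n) with hf'def
  have hderiv : ∀ n w, HasFDerivAt (f n) (f' n w) w := by
    intro n w
    have h1 : HasFDerivAt (fun w : Fin g → ℂ =>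
        (Real.pi : ℂ) * Complex.I *
          ((fun j => ((n j : ℤ) : ℂ)) ⬝ᵥ (τ *ᵥ fun j => ((n j : ℤ) : ℂ)))
        + 2 * (Real.pi : ℂ) * Complex.I * Lmap n w)
        ((2 * (Real.pi : ℂ) * Complex.I) • Lmap n) w :=
      (((Lmap n).hasFDerivAt (x := w)).const_mul _).const_add _
    exact h1.cexp
  -- exponent real part bound on the ball
  have hwb : ∀ w ∈ Metric.ball z 1, ‖w‖ ≤ ‖z‖ + 1 := by
    intro w hw
    have : ‖w - z‖ < 1 := by simpa [dist_eq_norm] using hw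
    calc ‖w‖ = ‖z + (w - z)‖ := by ring_nf
      _ ≤ ‖z‖ + ‖w - z‖ := norm_add_le _ _
      _ ≤ ‖z‖ + 1 := by linarith
  have hre : ∀ n : Fin g → ℤ, ∀ w ∈ Metric.ball z 1,
      ((Real.pi : ℂ) * Complex.I *
        ((fun j => ((n j : ℤ) : ℂ)) ⬝ᵥ (τ *ᵥ fun j => ((n j : ℤ) : ℂ)))
      + 2 * (Real.pi : ℂ) * Complex.I * Lmap n w).re
      ≤ -(Real.pi * c) * (∑ j, ((n j : ℤ) : ℝ)^2)
        + (2 * Real.pi * (‖z‖ + 1)) * (∑ j, |((n j : ℤ) : ℝ)|) := by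
    intro n w hw
    rw [Complex.add_re, re_piI, re_2piI]
    have h1 : -(Real.pi * ((fun j => ((n j : ℤ) : ℂ)) ⬝ᵥ (τ *ᵥ fun j => ((n j : ℤ) : ℂ))).im)
        ≤ -(Real.pi * c) * (∑ j, ((n j : ℤ) : ℝ)^2) := by
      rw [im_quad]
      have := hcq (fun j => ((n j : ℤ) : ℝ))
      nlinarith [Real.pi_pos]
    have h2 : -(2 * Real.pi * (Lmap n w).im)
        ≤ (2 * Real.pi * (‖z‖ + 1)) * (∑ j, |((n j : ℤ) : ℝ)|) := by
      have hb := im_Lmap_le n w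
      have hS0 : (0:ℝ) ≤ ∑ j, |((n j : ℤ) : ℝ)| :=
        Finset.sum_nonneg fun j _ => abs_nonneg _
      have h3 : -(Lmap n w).im ≤ (∑ j, |((n j : ℤ) : ℝ)|) * (‖z‖ + 1) := by
        have := neg_abs_le (Lmap n w).im
        have hw' := hwb w hw
        nlinarith [norm_nonneg w]
      nlinarith [Real.pi_pos]
    linarith
  have hSle : ∀ n : Fin g → ℤ,
      -(Real.pi * c) * (∑ j, ((n j : ℤ) : ℝ)^2)
        + A * (∑ j, |((n j : ℤ) : ℝ)|)
        = ∑ j, (-(Real.pi * c) * ((n j : ℤ) : ℝ)^2 + A * |((n j : ℤ) : ℝ)|) := by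
    intro n
    rw [Finset.sum_add_distrib, ← Finset.mul_sum, ← Finset.mul_sum]
  have hexp_prod : ∀ n : Fin g → ℤ,
      Real.exp (-(Real.pi * c) * (∑ j, ((n j : ℤ) : ℝ)^2) + A * (∑ j, |((n j : ℤ) : ℝ)|))
        = ∏ j, v (n j) := by
    intro n
    rw [hSle n, Real.exp_sum]
  -- bound on f on the ball
  have hfb : ∀ n : Fin g → ℤ, ∀ w ∈ Metric.ball z 1, ‖f n w‖ ≤ ∏ j, v (n j) := by
    intro n w hw
    rw [hfdef]
    simp only [Complex.norm_exp]
    rw [← hexp_prod n]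
    apply Real.exp_le_exp.mpr
    have h1 := hre n w hw
    have hS0 : (0:ℝ) ≤ ∑ j, |((n j : ℤ) : ℝ)| :=
      Finset.sum_nonneg fun j _ => abs_nonneg _
    have hA' : 2 * Real.pi * (‖z‖ + 1) ≤ A := by rw [hA]; linarith
    nlinarith
  -- bound on f' on the ball
  have hf'b : ∀ n : Fin g → ℤ, ∀ w ∈ Metric.ball z 1, ‖f' n w‖ ≤ u n := by
    intro n w hw
    rw [hf'def]
    simp only
    set S : ℝ := ∑ j, |((n j : ℤ) : ℝ)| with hSdef
    have hS0 : (0:ℝ) ≤ S := Finset.sum_nonneg fun j _ => abs_nonneg _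
    have hL : ‖(2 * (Real.pi : ℂ) * Complex.I) • Lmap n‖ ≤ 2 * Real.pi * S := by
      refine le_trans (norm_smul_le (2 * (Real.pi : ℂ) * Complex.I) (Lmap n)) ?_
      have h2 : ‖(2 * (Real.pi : ℂ) * Complex.I)‖ = 2 * Real.pi := by
        simp [norm_mul, Real.pi_nonneg, abs_of_nonneg]
      rw [h2]
      have := Lmap_norm_le n
      nlinarith [Real.pi_pos]
    have hnorm : ‖f n w • ((2 * (Real.pi : ℂ) * Complex.I) • Lmap n)‖
        ≤ ‖f n w‖ * (2 * Real.pi * S) := by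
      refine le_trans (norm_smul_le (f n w) ((2 * (Real.pi : ℂ) * Complex.I) • Lmap n)) ?_
      exact mul_le_mul_of_nonneg_left hL (norm_nonneg _)
    refine hnorm.trans ?_
    -- ‖f n w‖ ≤ exp(E) where E = -(πc)Σsq + 2π(‖z‖+1) S
    have hE : ‖f n w‖ ≤ Real.exp (-(Real.pi * c) * (∑ j, ((n j : ℤ) : ℝ)^2)
        + (2 * Real.pi * (‖z‖ + 1)) * S) := by
      rw [hfdef]
      simp only [Complex.norm_exp]
      exact Real.exp_le_exp.mpr (hre n w hw)
    have hSexp : S ≤ Real.exp S := (Real.add_one_le_exp S).trans' (by linarith)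
    have key : ‖f n w‖ * (2 * Real.pi * S) ≤ 2 * Real.pi * (Real.exp (-(Real.pi * c) * (∑ j, ((n j : ℤ) : ℝ)^2)
        + (2 * Real.pi * (‖z‖ + 1)) * S) * Real.exp S) := by
      rw [← mul_assoc]
      set E : ℝ := Real.exp (-(Real.pi * c) * (∑ j, ((n j : ℤ) : ℝ)^2)
            + (2 * Real.pi * (‖z‖ + 1)) * S) with hEdef
      have hE0 : 0 ≤ E := (Real.exp_pos _).le
      have h4 : ‖f n w‖ * S ≤ E * S := mul_le_mul_of_nonneg_right hE hS0
      have h5 : ‖f n w‖ * (2 * Real.pi) * S ≤ (2 * Real.pi) * (E * S) := by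
        have := mul_le_mul_of_nonneg_left h4 (by positivity : (0:ℝ) ≤ 2 * Real.pi)
        calc ‖f n w‖ * (2 * Real.pi) * S = 2 * Real.pi * (‖f n w‖ * S) := by ring
          _ ≤ 2 * Real.pi * (E * S) := this
      refine h5.trans ?_
      have h6 : E * S ≤ E * Real.exp S := mul_le_mul_of_nonneg_left hSexp hE0
      exact mul_le_mul_of_nonneg_left h6 (by positivity)
    refine key.trans ?_
    rw [hudef]
    simp only
    rw [← Real.exp_add]
    have heq : -(Real.pi * c) * (∑ j, ((n j : ℤ) : ℝ)^2)
        + (2 * Real.pi * (‖z‖ + 1)) * S + S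
        = -(Real.pi * c) * (∑ j, ((n j : ℤ) : ℝ)^2) + A * S := by
      rw [hA]; ring
    rw [heq, hSdef, hexp_prod n]
  -- summability of f at z
  have hf0 : Summable fun n => f n z := by
    refine Summable.of_norm_bounded hU ?_
    intro n
    exact hfb n z (Metric.mem_ball_self one_pos)
  -- conclude
  have hmain : HasFDerivAt (fun y => ∑' n, f n y) (∑' n, f' n z) z :=
    hasFDerivAt_tsum_of_isPreconnected hu Metric.isOpen_ball
      (convex_ball z 1).isPreconnected (fun n x hx => hderiv n x)
      (fun n x hx => hf'b n x hx) (Metric.mem_ball_self one_pos) hf0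
      (Metric.mem_ball_self one_pos)
  have heqfun : (fun w : Fin g → ℂ => riemannTheta τ w) = fun y => ∑' n, f n y := by
    funext w
    rw [riemannTheta, thetaChar]
    exact tsum_congr fun n => term_eq τ w n
  rw [heqfun]
  exact hmain.differentiableAt


end
end

section
/- (The Igusa form vanishes identically in genus 1.) For g = 1 and every τ ∈ H_1 (i.e. every τ ∈ ℂ with Im τ > 0), one has F_1(τ) = 0, that is, 2·Σ_m θ_m(τ)^{16} = (Σ_m θ_m(τ)^{8})², where the sums run over the four characteristics m = (ε,δ) with ε, δ ∈ {0,1/2}. -/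
open Complex Matrix BigOperators

noncomputable section

namespace IgusaAux

abbrev V := ℤ × ℤ × ℤ × ℤ

/-- Genus-1 theta term. -/
def f (t : ℂ) (ε δ : ℝ) (n : ℤ) : ℂ :=
  Complex.exp ((Real.pi : ℂ) * Complex.I * t * ((n : ℂ) + (ε : ℂ)) ^ 2
    + 2 * (Real.pi : ℂ) * Complex.I * ((n : ℂ) + (ε : ℂ)) * (δ : ℂ))

def F4 (t : ℂ) (ε δ : ℝ) (v : V) : ℂ :=
  f t ε δ v.1 * (f t ε δ v.2.1 * (f t ε δ v.2.2.1 * f t ε δ v.2.2.2))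

/-- Parity-splitting bijection `Bool × ℤ⁴ ≃ ℤ⁴` (last coordinate determined by parity). -/
def e1 : Bool × V ≃ V where
  toFun p := (p.2.1, p.2.2.1, p.2.2.2.1,
    2 * p.2.2.2.2 + (if p.1 then 1 else 0) - p.2.1 - p.2.2.1 - p.2.2.2.1)
  invFun v := (decide ((v.1 + v.2.1 + v.2.2.1 + v.2.2.2) % 2 = 1),
    (v.1, v.2.1, v.2.2.1, (v.1 + v.2.1 + v.2.2.1 + v.2.2.2) / 2))
  left_inv := by rintro ⟨bb, a, b, c, x⟩; cases bb <;> simp [Prod.ext_iff] <;> omega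
  right_inv := by
    rintro ⟨a, b, c, d⟩
    by_cases h : (a + b + c + d) % 2 = 1 <;> simp [Prod.ext_iff, h] <;> omega

/-- Hadamard-type bijection `Bool × ℤ⁴ ≃ ℤ⁴` used for Jacobi's identity. -/
def e2 : Bool × V ≃ V where
  toFun p := (p.2.2.2.2, p.2.1 + p.2.2.1 - p.2.2.2.2 - 1, p.2.1 + p.2.2.2.1 - p.2.2.2.2 - 1,
    if p.1 then p.2.2.1 + p.2.2.2.1 - p.2.2.2.2 - 1 else p.2.2.2.2 - p.2.2.1 - p.2.2.2.1)
  invFun v :=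
    let p := v.1; let q := v.2.1; let r := v.2.2.1; let s := v.2.2.2
    let a := if (p + q + r + s) % 2 = 0 then (p + q + r + s + 2) / 2 else (p + q + r - s + 1) / 2
    (decide ((p + q + r + s) % 2 = 1), (a, q - a + p + 1, r - a + p + 1, p))
  left_inv := by rintro ⟨bb, a, b, c, x⟩; cases bb <;> simp [Prod.ext_iff] <;> omega
  right_inv := by
    rintro ⟨p, q, r, s⟩
    by_cases h : (p + q + r + s) % 2 = 1 <;> simp [Prod.ext_iff, h] <;> omega

lemma exp_eq (k : ℤ) {x y : ℂ} (h : x = y + k * (2 * (Real.pi : ℂ) * Complex.I)) :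
    Complex.exp x = Complex.exp y := by
  rw [h, Complex.exp_add, Complex.exp_int_mul_two_pi_mul_I, mul_one]

lemma exp_eq_neg (k : ℤ) {x y : ℂ}
    (h : x = y + k * (2 * (Real.pi : ℂ) * Complex.I) + (Real.pi : ℂ) * Complex.I) :
    Complex.exp x = -Complex.exp y := by
  rw [h, Complex.exp_add, Complex.exp_add, Complex.exp_int_mul_two_pi_mul_I,
    Complex.exp_pi_mul_I, mul_one, mul_neg_one]

lemma f_eq_jacobi (t : ℂ) (ε δ : ℝ) (n : ℤ) :
    f t ε δ n = Complex.exp ((Real.pi : ℂ) * Complex.I * t * (ε : ℂ) ^ 2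
        + 2 * (Real.pi : ℂ) * Complex.I * (ε : ℂ) * (δ : ℂ))
      * jacobiTheta₂_term n ((ε : ℂ) * t + (δ : ℂ)) t := by
  rw [f, jacobiTheta₂_term, ← Complex.exp_add]
  congr 1
  ring

lemma summable_norm_jt {t : ℂ} (ht : 0 < t.im) (z : ℂ) :
    Summable fun n : ℤ => ‖jacobiTheta₂_term n z t‖ :=
  Summable.of_nonneg_of_le (fun _ => norm_nonneg _)
    (fun n => norm_jacobiTheta₂_term_le ht le_rfl le_rfl n)
    (by simpa using summable_pow_mul_jacobiTheta₂_term_bound |z.im| ht 0)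

lemma summable_norm_f {t : ℂ} (ht : 0 < t.im) (ε δ : ℝ) :
    Summable fun n : ℤ => ‖f t ε δ n‖ := by
  simp only [f_eq_jacobi, norm_mul]
  exact (summable_norm_jt ht _).mul_left _

lemma summable_norm_F4 {t : ℂ} (ht : 0 < t.im) (ε δ : ℝ) :
    Summable fun v : V => ‖F4 t ε δ v‖ := by
  have hf := summable_norm_f ht ε δ
  have h1 : Summable fun y : ℤ × ℤ => ‖f t ε δ y.1 * f t ε δ y.2‖ := hf.mul_norm hf
  have h2 : Summable fun y : ℤ × ℤ × ℤ =>
      ‖f t ε δ y.1 * (f t ε δ y.2.1 * f t ε δ y.2.2)‖ :=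
    Summable.mul_norm (g := fun y : ℤ × ℤ => f t ε δ y.1 * f t ε δ y.2) hf h1
  exact Summable.mul_norm
    (g := fun y : ℤ × ℤ × ℤ => f t ε δ y.1 * (f t ε δ y.2.1 * f t ε δ y.2.2)) hf h2

lemma summable_F4 {t : ℂ} (ht : 0 < t.im) (ε δ : ℝ) : Summable (F4 t ε δ) :=
  (summable_norm_F4 ht ε δ).of_norm

lemma theta_pow4 {t : ℂ} (ht : 0 < t.im) (ε δ : ℝ) :
    (∑' n : ℤ, IgusaAux.f t ε δ n) ^ 4 = ∑' v : V, F4 t ε δ v := by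
  have hf := summable_norm_f ht ε δ
  calc (∑' n : ℤ, IgusaAux.f t ε δ n) ^ 4
      = (∑' n : ℤ, IgusaAux.f t ε δ n) * ((∑' n : ℤ, IgusaAux.f t ε δ n) *
          ((∑' n : ℤ, IgusaAux.f t ε δ n) * (∑' n : ℤ, IgusaAux.f t ε δ n))) := by ring
    _ = ∑' v : V, F4 t ε δ v := by
        rw [tsum_mul_tsum_of_summable_norm hf hf,
          tsum_mul_tsum_of_summable_norm hf (hf.mul_norm hf),
          tsum_mul_tsum_of_summable_norm hf (hf.mul_norm (hf.mul_norm hf))]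
        rfl

lemma tsum_split (F : V → ℂ) (hF : Summable F) (e : Bool × V ≃ V) :
    ∑' v : V, F v = (∑' v : V, F (e (false, v))) + ∑' v : V, F (e (true, v)) := by
  have hs : Summable fun p : Bool × V => F (e p) := e.summable_iff.mpr hF
  calc ∑' v : V, F v = ∑' p : Bool × V, F (e p) := (e.tsum_eq F).symm
    _ = ∑' b : Bool, ∑' v : V, F (e (b, v)) := Summable.tsum_prod' hs fun b => hs.prod_factor b
    _ = _ := tsum_bool _

lemma term1 (t : ℂ) (v : V) : F4 t 0 (1/2) (e1 (false, v)) = F4 t 0 0 (e1 (false, v)) := by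
  obtain ⟨a, b, c, x⟩ := v
  simp only [e1, Equiv.coe_fn_mk, Bool.false_eq_true, if_false, F4, f, ← Complex.exp_add]
  exact exp_eq x (by push_cast; ring)

lemma term2 (t : ℂ) (v : V) : F4 t 0 (1/2) (e1 (true, v)) = -F4 t 0 0 (e1 (true, v)) := by
  obtain ⟨a, b, c, x⟩ := v
  simp only [e1, Equiv.coe_fn_mk, if_true, F4, f, ← Complex.exp_add]
  exact exp_eq_neg x (by push_cast; ring)

lemma term3 (t : ℂ) (v : V) : F4 t (1/2) 0 (e2 (false, v)) = F4 t 0 0 (e1 (true, v)) := by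
  obtain ⟨a, b, c, x⟩ := v
  simp only [e1, e2, Equiv.coe_fn_mk, Bool.false_eq_true, if_false, if_true, F4, f,
    ← Complex.exp_add]
  congr 1
  push_cast
  ring

lemma term4 (t : ℂ) (v : V) : F4 t (1/2) 0 (e2 (true, v)) = F4 t 0 0 (e1 (true, v)) := by
  obtain ⟨a, b, c, x⟩ := v
  simp only [e1, e2, Equiv.coe_fn_mk, if_true, F4, f, ← Complex.exp_add]
  congr 1
  push_cast
  ring

/-- Jacobi's identity θ₀₀⁴ = θ₀₁⁴ + θ₁₀⁴. -/
lemma jacobi {t : ℂ} (ht : 0 < t.im) :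
    (∑' n : ℤ, IgusaAux.f t 0 0 n) ^ 4
      = (∑' n : ℤ, IgusaAux.f t 0 (1/2) n) ^ 4 + (∑' n : ℤ, IgusaAux.f t (1/2) 0 n) ^ 4 := by
  rw [theta_pow4 ht, theta_pow4 ht, theta_pow4 ht,
    tsum_split _ (summable_F4 ht 0 0) e1, tsum_split _ (summable_F4 ht 0 (1/2)) e1,
    tsum_split _ (summable_F4 ht (1/2) 0) e2,
    tsum_congr (term1 t), tsum_congr (term2 t), tsum_congr (term3 t), tsum_congr (term4 t),
    tsum_neg]
  ring

/-- The odd theta constant vanishes. -/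
lemma theta_half_half (t : ℂ) : ∑' n : ℤ, IgusaAux.f t (1/2) (1/2) n = 0 := by
  have key : ∀ n : ℤ, f t (1/2) (1/2) ((Equiv.subLeft (-1 : ℤ)) n) = -f t (1/2) (1/2) n := by
    intro n
    simp only [Equiv.subLeft_apply, f]
    exact exp_eq_neg (-n - 1) (by push_cast; ring)
  have h := (Equiv.subLeft (-1 : ℤ)).tsum_eq (f t (1/2) (1/2))
  rw [tsum_congr key, tsum_neg] at h
  linear_combination (-1/2 : ℂ) * h

/-- Reduction of the genus-1 theta constant to a sum over ℤ. -/
lemma thetaChar_one (t : ℂ) (ε δ : ℝ) :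
    thetaChar (g := 1) (Matrix.of fun _ _ => t) (fun _ => ε) (fun _ => δ) 0
      = ∑' n : ℤ, IgusaAux.f t ε δ n := by
  rw [thetaChar, ← ((Equiv.funUnique (Fin 1) ℤ).symm.tsum_eq
    (thetaCharTerm (g := 1) (Matrix.of fun _ _ => t) (fun _ => ε) (fun _ => δ) 0))]
  refine tsum_congr fun n => ?_
  simp only [thetaCharTerm, f, dotProduct, Matrix.mulVec, Fin.sum_univ_one, Matrix.of_apply,
    Pi.zero_apply, Equiv.funUnique_symm_apply, Function.const_apply,
    show ∀ i : Fin 1, uniqueElim (α := fun _ : Fin 1 => ℤ) n i = n from fun _ => rfl]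
  congr 1
  ring

end IgusaAux

/-- the Igusa form vanishes identically in genus 1. -/
theorem igusaF_one_eq_zero (t : ℂ) (ht : 0 < t.im) :
    igusaF 1 (Matrix.of fun _ _ => t) = 0 := by
  have huniv : (Finset.univ : Finset ((Fin 1 → ZMod 2) × (Fin 1 → ZMod 2)))
      = {(0, 0), (0, 1), (1, 0), (1, 1)} := by decide
  have hsum : ∀ φ : (Fin 1 → ZMod 2) × (Fin 1 → ZMod 2) → ℂ,
      ∑ m, φ m = φ (0, 0) + φ (0, 1) + φ (1, 0) + φ (1, 1) := by
    intro φ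
    rw [huniv, Finset.sum_insert (by decide), Finset.sum_insert (by decide),
      Finset.sum_insert (by decide), Finset.sum_singleton]
    ring
  have h0 : toHalf (0 : Fin 1 → ZMod 2) = fun _ => (0 : ℝ) := by
    funext i; simp [toHalf]
  have h1 : toHalf (1 : Fin 1 → ZMod 2) = fun _ => (1/2 : ℝ) := by
    funext i; simp [toHalf, show ((1 : ZMod 2)).val = 1 from rfl]
  have hJ := IgusaAux.jacobi ht
  have hz := IgusaAux.theta_half_half t
  simp only [igusaF, hsum, h0, h1, IgusaAux.thetaChar_one t, hz]
  rw [show (∑' n : ℤ, IgusaAux.f t 0 0 n) ^ 16 = ((∑' n : ℤ, IgusaAux.f t 0 0 n) ^ 4) ^ 4 by ring,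
    show (∑' n : ℤ, IgusaAux.f t 0 0 n) ^ 8 = ((∑' n : ℤ, IgusaAux.f t 0 0 n) ^ 4) ^ 2 by ring, hJ]
  ring

end
end

section
/- (Jacobi's quartic identity: the defining equation of the image of the genus 1 theta-constant map.) For every τ ∈ ℂ with Im τ > 0, one has θ[0;0](τ)⁴ = θ[0;1/2](τ)⁴ + θ[1/2;0](τ)⁴. In terms of the Jacobi theta function Θ₂(z,τ) := Σ_{n∈ℤ} exp(2πi n z + πi n²τ) (Mathlib's jacobiTheta₂), this states: (Θ₂(0,τ))⁴ = (Θ₂(1/2,τ))⁴ + (exp(πiτ/4)·Θ₂(τ/2,τ))⁴. -/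
open Complex Matrix BigOperators

noncomputable section

namespace JacobiQuartic

/-- Generalized theta term `exp(πiτ(n+a)² + 2πi n b)`. -/
def T (τ a b : ℂ) (n : ℤ) : ℂ :=
  Complex.exp ((Real.pi : ℂ) * Complex.I * τ * ((n : ℂ) + a) ^ 2
    + 2 * (Real.pi : ℂ) * Complex.I * (n : ℂ) * b)

lemma T_eq (τ a b : ℂ) (n : ℤ) :
    T τ a b n = Complex.exp ((Real.pi : ℂ) * Complex.I * τ * a ^ 2)
      * jacobiTheta₂_term n (a * τ + b) τ := by
  rw [T, jacobiTheta₂_term, ← Complex.exp_add]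
  congr 1
  ring

lemma summable_norm_T {τ : ℂ} (hτ : 0 < τ.im) (a b : ℂ) :
    Summable fun n : ℤ => ‖T τ a b n‖ := by
  simp_rw [T_eq, norm_mul]
  exact (summable_norm_iff.mpr
    ((summable_jacobiTheta₂_term_iff (a * τ + b) τ).mpr hτ)).mul_left _

lemma summable_T {τ : ℂ} (hτ : 0 < τ.im) (a b : ℂ) : Summable (T τ a b) :=
  (summable_norm_T hτ a b).of_norm

lemma hasSum_T {τ : ℂ} (hτ : 0 < τ.im) (a b : ℂ) :
    HasSum (T τ a b) (Complex.exp ((Real.pi : ℂ) * Complex.I * τ * a ^ 2)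
      * jacobiTheta₂ (a * τ + b) τ) := by
  rw [funext (T_eq τ a b)]
  exact (hasSum_jacobiTheta₂_term (a * τ + b) hτ).mul_left _

lemma im_two_mul {τ : ℂ} (hτ : 0 < τ.im) : 0 < (2 * τ).im := by
  rw [Complex.mul_im]
  simp
  linarith

/-- the set of pairs with even coordinate sum -/
def sE : Set (ℤ × ℤ) := {p | Even (p.1 + p.2)}

def eE : (ℤ × ℤ) ≃ sE :=
  Equiv.ofBijective (fun p => ⟨(p.1 + p.2, p.1 - p.2), ⟨p.1, by ring⟩⟩) (by
    constructor
    · rintro ⟨a, b⟩ ⟨c, d⟩ h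
      simp only [Subtype.ext_iff, Prod.mk.injEq] at h
      simp only [Prod.mk.injEq]
      omega
    · rintro ⟨⟨m, n⟩, hm⟩
      obtain ⟨k, hk⟩ := hm
      refine ⟨(k, m - k), ?_⟩
      simp only [Subtype.ext_iff, Prod.mk.injEq]
      omega)

def eO : (ℤ × ℤ) ≃ ↥sEᶜ :=
  Equiv.ofBijective (fun p => ⟨(p.1 + p.2 + 1, p.1 - p.2), by
      simp only [Set.mem_compl_iff, sE, Set.mem_setOf_eq, Int.even_iff]
      omega⟩) (by
    constructor
    · rintro ⟨a, b⟩ ⟨c, d⟩ h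
      simp only [Subtype.mk.injEq, Prod.mk.injEq] at h
      simp only [Prod.mk.injEq]
      omega
    · rintro ⟨⟨m, n⟩, hm⟩
      simp only [Set.mem_compl_iff, sE, Set.mem_setOf_eq, Int.even_iff] at hm
      refine ⟨((m + n - 1) / 2, (m - n - 1) / 2), ?_⟩
      simp only [Subtype.mk.injEq, Prod.mk.injEq]
      omega)

variable {τ : ℂ}

lemma hasSum_prod {a b : ℂ} {x y : ℂ} (hτ : 0 < τ.im)
    (hx : HasSum (T τ a b) x) (hy : HasSum (T τ a b) y) :
    HasSum (fun p : ℤ × ℤ => T τ a b p.1 * T τ a b p.2) (x * y) :=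
  hx.mul hy (summable_mul_of_summable_norm (summable_norm_T hτ a b) (summable_norm_T hτ a b))

lemma split {F : ℤ × ℤ → ℂ} {x y : ℂ}
    (hx : HasSum (fun p : ℤ × ℤ => F (p.1 + p.2, p.1 - p.2)) x)
    (hy : HasSum (fun p : ℤ × ℤ => F (p.1 + p.2 + 1, p.1 - p.2)) y) :
    HasSum F (x + y) := by
  have h1 : HasSum (F ∘ ((↑) : sE → ℤ × ℤ)) x := eE.hasSum_iff.mp hx
  have h2 : HasSum (F ∘ ((↑) : ↥sEᶜ → ℤ × ℤ)) y := eO.hasSum_iff.mp hy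
  exact h1.add_compl h2

/-- θ₃(τ)² = θ₃(2τ)² + θ₂(2τ)² -/
lemma theta3_sq (hτ : 0 < τ.im) (h3 : HasSum (T τ 0 0) (jacobiTheta₂ 0 τ)) :
    jacobiTheta₂ 0 τ ^ 2
      = (∑' n : ℤ, T (2 * τ) 0 0 n) ^ 2 + (∑' n : ℤ, T (2 * τ) (1/2) 0 n) ^ 2 := by
  have h2 := im_two_mul hτ
  have hA := (summable_T h2 0 0).hasSum
  have hB := (summable_T h2 (1/2) 0).hasSum
  have keyE : ∀ p : ℤ × ℤ,
      T (2 * τ) 0 0 p.1 * T (2 * τ) 0 0 p.2 = T τ 0 0 (p.1 + p.2) * T τ 0 0 (p.1 - p.2) := by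
    intro p
    simp only [T, ← Complex.exp_add]
    congr 1
    push_cast
    ring
  have keyO : ∀ p : ℤ × ℤ,
      T (2 * τ) (1/2) 0 p.1 * T (2 * τ) (1/2) 0 p.2
        = T τ 0 0 (p.1 + p.2 + 1) * T τ 0 0 (p.1 - p.2) := by
    intro p
    simp only [T, ← Complex.exp_add]
    congr 1
    push_cast
    ring
  have main : HasSum (fun p : ℤ × ℤ => T τ 0 0 p.1 * T τ 0 0 p.2)
      ((∑' n : ℤ, T (2 * τ) 0 0 n) * (∑' n : ℤ, T (2 * τ) 0 0 n)
        + (∑' n : ℤ, T (2 * τ) (1/2) 0 n) * (∑' n : ℤ, T (2 * τ) (1/2) 0 n)) := by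
    refine split ?_ ?_
    · exact funext keyE ▸ hasSum_prod h2 hA hA
    · exact funext keyO ▸ hasSum_prod h2 hB hB
  have := (hasSum_prod hτ h3 h3).unique main
  rw [sq, this]
  ring

/-- θ₄(τ)² = θ₃(2τ)² - θ₂(2τ)² -/
lemma theta4_sq (hτ : 0 < τ.im) (h4 : HasSum (T τ 0 (1/2)) (jacobiTheta₂ (1/2) τ)) :
    jacobiTheta₂ (1/2) τ ^ 2
      = (∑' n : ℤ, T (2 * τ) 0 0 n) ^ 2 - (∑' n : ℤ, T (2 * τ) (1/2) 0 n) ^ 2 := by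
  have h2 := im_two_mul hτ
  have hA := (summable_T h2 0 0).hasSum
  have hB := (summable_T h2 (1/2) 0).hasSum
  have keyE : ∀ p : ℤ × ℤ,
      T (2 * τ) 0 0 p.1 * T (2 * τ) 0 0 p.2
        = T τ 0 (1/2) (p.1 + p.2) * T τ 0 (1/2) (p.1 - p.2) := by
    intro p
    have h : T τ 0 (1/2) (p.1 + p.2) * T τ 0 (1/2) (p.1 - p.2)
        = (T (2 * τ) 0 0 p.1 * T (2 * τ) 0 0 p.2)
          * Complex.exp ((p.1 : ℂ) * (2 * (Real.pi : ℂ) * Complex.I)) := by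
      simp only [T, ← Complex.exp_add]
      congr 1
      push_cast
      ring
    rw [h, Complex.exp_int_mul_two_pi_mul_I, mul_one]
  have keyO : ∀ p : ℤ × ℤ,
      -(T (2 * τ) (1/2) 0 p.1 * T (2 * τ) (1/2) 0 p.2)
        = T τ 0 (1/2) (p.1 + p.2 + 1) * T τ 0 (1/2) (p.1 - p.2) := by
    intro p
    have h : T τ 0 (1/2) (p.1 + p.2 + 1) * T τ 0 (1/2) (p.1 - p.2)
        = (T (2 * τ) (1/2) 0 p.1 * T (2 * τ) (1/2) 0 p.2)
          * (Complex.exp ((p.1 : ℂ) * (2 * (Real.pi : ℂ) * Complex.I))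
            * Complex.exp ((Real.pi : ℂ) * Complex.I)) := by
      simp only [T, ← Complex.exp_add]
      congr 1
      push_cast
      ring
    rw [h, Complex.exp_int_mul_two_pi_mul_I, one_mul, Complex.exp_pi_mul_I, mul_neg_one]
  have main : HasSum (fun p : ℤ × ℤ => T τ 0 (1/2) p.1 * T τ 0 (1/2) p.2)
      ((∑' n : ℤ, T (2 * τ) 0 0 n) * (∑' n : ℤ, T (2 * τ) 0 0 n)
        + -((∑' n : ℤ, T (2 * τ) (1/2) 0 n) * (∑' n : ℤ, T (2 * τ) (1/2) 0 n))) := by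
    refine split ?_ ?_
    · exact funext keyE ▸ hasSum_prod h2 hA hA
    · exact funext keyO ▸ (hasSum_prod h2 hB hB).neg
  have := (hasSum_prod hτ h4 h4).unique main
  rw [sq, this]
  ring

/-- θ₂(τ)² = 2 θ₂(2τ) θ₃(2τ) -/
lemma theta2_sq {v : ℂ} (hτ : 0 < τ.im) (h2' : HasSum (T τ (1/2) 0) v) :
    v ^ 2
      = 2 * (∑' n : ℤ, T (2 * τ) 0 0 n) * (∑' n : ℤ, T (2 * τ) (1/2) 0 n) := by
  have h2 := im_two_mul hτ
  have hA := (summable_T h2 0 0).hasSum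
  have hB := (summable_T h2 (1/2) 0).hasSum
  have hshift : ∑' n : ℤ, T (2 * τ) 1 0 n = ∑' n : ℤ, T (2 * τ) 0 0 n := by
    have e1 : ∑' n : ℤ, T (2 * τ) 0 0 (n + 1) = ∑' n : ℤ, T (2 * τ) 0 0 n := by
      simpa using (Equiv.addRight (1 : ℤ)).tsum_eq (fun n : ℤ => T (2 * τ) 0 0 n)
    rw [← e1]
    refine tsum_congr fun n => ?_
    simp only [T]
    congr 1
    push_cast
    ring
  have hA1 : HasSum (T (2 * τ) 1 0) (∑' n : ℤ, T (2 * τ) 0 0 n) :=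
    hshift ▸ (summable_T h2 1 0).hasSum
  have keyE : ∀ p : ℤ × ℤ,
      T (2 * τ) (1/2) 0 p.1 * T (2 * τ) 0 0 p.2
        = T τ (1/2) 0 (p.1 + p.2) * T τ (1/2) 0 (p.1 - p.2) := by
    intro p
    simp only [T, ← Complex.exp_add]
    congr 1
    push_cast
    ring
  have keyO : ∀ p : ℤ × ℤ,
      T (2 * τ) 1 0 p.1 * T (2 * τ) (1/2) 0 p.2
        = T τ (1/2) 0 (p.1 + p.2 + 1) * T τ (1/2) 0 (p.1 - p.2) := by
    intro p
    simp only [T, ← Complex.exp_add]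
    congr 1
    push_cast
    ring
  have hodd : HasSum (fun p : ℤ × ℤ => T (2 * τ) 1 0 p.1 * T (2 * τ) (1/2) 0 p.2)
      ((∑' n : ℤ, T (2 * τ) 0 0 n) * (∑' n : ℤ, T (2 * τ) (1/2) 0 n)) :=
    hA1.mul hB (summable_mul_of_summable_norm (summable_norm_T h2 1 0)
      (summable_norm_T h2 (1/2) 0))
  have heven : HasSum (fun p : ℤ × ℤ => T (2 * τ) (1/2) 0 p.1 * T (2 * τ) 0 0 p.2)
      ((∑' n : ℤ, T (2 * τ) (1/2) 0 n) * (∑' n : ℤ, T (2 * τ) 0 0 n)) :=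
    hB.mul hA (summable_mul_of_summable_norm (summable_norm_T h2 (1/2) 0)
      (summable_norm_T h2 0 0))
  have main : HasSum (fun p : ℤ × ℤ => T τ (1/2) 0 p.1 * T τ (1/2) 0 p.2)
      ((∑' n : ℤ, T (2 * τ) (1/2) 0 n) * (∑' n : ℤ, T (2 * τ) 0 0 n)
        + (∑' n : ℤ, T (2 * τ) 0 0 n) * (∑' n : ℤ, T (2 * τ) (1/2) 0 n)) := by
    refine split ?_ ?_
    · exact funext keyE ▸ heven
    · exact funext keyO ▸ hodd
  have := (hasSum_prod hτ h2' h2').unique main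
  rw [sq, this]
  ring

end JacobiQuartic

/-- Jacobi's quartic identity θ[0;0]⁴ = θ[0;1/2]⁴ + θ[1/2;0]⁴, expressed via
Mathlib's Jacobi theta function. -/
theorem jacobi_quartic_identity (τ : ℂ) (hτ : 0 < τ.im) :
    (jacobiTheta₂ 0 τ) ^ 4
      = (jacobiTheta₂ (1/2) τ) ^ 4
        + (Complex.exp ((Real.pi : ℂ) * Complex.I * τ / 4) * jacobiTheta₂ (τ / 2) τ) ^ 4 := by
  open JacobiQuartic in
  have h3 : HasSum (T τ 0 0) (jacobiTheta₂ 0 τ) := by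
    have := hasSum_T hτ 0 0
    simpa using this
  have h4 : HasSum (T τ 0 (1/2)) (jacobiTheta₂ (1/2) τ) := by
    have := hasSum_T hτ 0 (1/2)
    simpa using this
  have h2' : HasSum (T τ (1/2) 0)
      (Complex.exp ((Real.pi : ℂ) * Complex.I * τ / 4) * jacobiTheta₂ (τ / 2) τ) := by
    have := hasSum_T hτ (1/2) 0
    rw [show ((1:ℂ)/2) * τ + 0 = τ / 2 by ring,
      show (Real.pi : ℂ) * Complex.I * τ * (1/2) ^ 2 = (Real.pi : ℂ) * Complex.I * τ / 4
        by ring] at this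
    exact this
  have k3 := JacobiQuartic.theta3_sq hτ h3
  have k4 := JacobiQuartic.theta4_sq hτ h4
  have k2 := JacobiQuartic.theta2_sq hτ h2'
  have e : ∀ x : ℂ, x ^ 4 = (x ^ 2) ^ 2 := fun x => by ring
  rw [e, e, e, k3, k4, k2]
  ring

end
end
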